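/- arXiv:2605.30997 — 6 statements merged into one kernel-verified Lean document; each statement's English description precedes it below -/
import Mathlib

section
/- If the target risk R_Q preserves the preorder induced by the benchmark vector R (i.e., R(f) ≤ R(f') coordinatewise implies R_Q(f) ≤ R_Q(f')), then there exists a monotone function s : ℝ^K → ℝ such that R_Q(f) = s(R(f)) for all f in F. -/
/-- If the target risk `RQ` preserves the preorder induced by the
benchmark vector `R`, then there is a monotone `s : ℝ^K → ℝ` with `RQ = s ∘ R`. -/
theorem monotone_implies_sufficiency {F : Type*} {K : ℕ}
    (R : F → Fin K → ℝ) (RQ : F → ℝ)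
    (hbR : ∀ f k, R f k ∈ Set.Icc (0:ℝ) 1) (hbQ : ∀ f, RQ f ∈ Set.Icc (0:ℝ) 1)
    (hmono : ∀ f f', (∀ k, R f k ≤ R f' k) → RQ f ≤ RQ f') :
    ∃ s : (Fin K → ℝ) → ℝ, Monotone s ∧ ∀ f, RQ f = s (R f) := by
  set S : (Fin K → ℝ) → Set ℝ :=
    fun u => insert 0 {y | ∃ f, (∀ k, R f k ≤ u k) ∧ y = RQ f} with hS
  have hbdd : ∀ u, BddAbove (S u) := by
    intro u
    refine ⟨1, ?_⟩
    rintro y (rfl | ⟨f, _, rfl⟩)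
    · norm_num
    · exact (hbQ f).2
  refine ⟨fun u => sSup (S u), ?_, ?_⟩
  · intro u v huv
    apply csSup_le_csSup (hbdd v)
    · exact ⟨0, Or.inl rfl⟩
    · rintro y (rfl | ⟨f, hf, rfl⟩)
      · exact Or.inl rfl
      · exact Or.inr ⟨f, fun k => (hf k).trans (huv k), rfl⟩
  · intro f
    apply le_antisymm
    · exact le_csSup (hbdd _) (Or.inr ⟨f, fun k => le_rfl, rfl⟩)
    · refine csSup_le ⟨0, Or.inl rfl⟩ ?_
      rintro y (rfl | ⟨g, hg, rfl⟩)
      · exact (hbQ f).1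
      · exact hmono g f hg
end

section
/- If R : F → [0,1]^K, then for every t ∈ (0,1] the t-Pareto covering number of F is at most (1 + 1/t)^{K−1}. -/
/-- Worst-case bound on the `t`-Pareto covering number:
for `R : F → [0,1]^K` and `t ∈ (0,1]` there is a `t`-Pareto set of
cardinality at most `(1 + 1/t)^(K-1)`. -/
theorem pareto_covering_number_bound {F : Type*} {K : ℕ}
    (R : F → Fin K → ℝ)
    (hbound : ∀ f k, R f k ∈ Set.Icc (0:ℝ) 1)
    (hcompact : IsCompact (Set.range R))
    (t : ℝ) (ht : t ∈ Set.Ioc (0:ℝ) 1) :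
    ∃ s : Finset F, (s.card : ℝ) ≤ (1 + 1 / t) ^ (K - 1) ∧
      ∀ f : F, ∃ g ∈ s, ∀ k, R g k ≤ R f k + t := by
  classical
  obtain ⟨ht0, ht1⟩ := ht
  have hbase1 : (1:ℝ) ≤ 1 + 1/t := le_add_of_nonneg_right (by positivity)
  have hone_le : (1:ℝ) ≤ (1 + 1/t) ^ (K - 1) := one_le_pow₀ hbase1
  rcases isEmpty_or_nonempty F with hF | hF
  · refine ⟨∅, ?_, fun f => (IsEmpty.false f).elim⟩
    simp only [Finset.card_empty, Nat.cast_zero]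
    linarith
  · rcases Nat.eq_zero_or_pos K with hK | hK
    · obtain ⟨f₀⟩ := hF
      refine ⟨{f₀}, ?_, fun f => ⟨f₀, Finset.mem_singleton_self _, fun k => ?_⟩⟩
      · simpa using hone_le
      · exact absurd k.isLt (by omega)
    · set m := ⌊1/t⌋₊ with hm
      have hL : K - 1 < K := by omega
      set L : Fin K := ⟨K-1, hL⟩ with hLdef
      have hle : K - 1 ≤ K := by omega
      have hφmem : ∀ (f : F) (k : Fin (K-1)), ⌊R f (k.castLE hle) / t⌋₊ < m + 1 := by
        intro f k
        have h1 : R f (k.castLE hle) / t ≤ 1 / t := by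
          gcongr
          exact (hbound f _).2
        exact Nat.lt_succ_of_le (Nat.floor_mono h1)
      set φ : F → (Fin (K-1) → Fin (m+1)) := fun f k => ⟨_, hφmem f k⟩ with hφ
      -- near-minimizer of the last coordinate in each cell
      have key : ∀ f : F, ∃ g : F, φ g = φ f ∧ ∀ f' : F, φ f' = φ f → R g L ≤ R f' L + t := by
        intro f
        set S : Set ℝ := (fun x => R x L) '' {x | φ x = φ f} with hS
        have hne : S.Nonempty := ⟨R f L, ⟨f, rfl, rfl⟩⟩
        have hbdd : BddBelow S := by
          refine ⟨0, ?_⟩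
          rintro a ⟨x, -, rfl⟩
          exact (hbound x L).1
        obtain ⟨a, ⟨g, hg, rfl⟩, ha⟩ := Real.lt_sInf_add_pos hne ht0
        refine ⟨g, hg, fun f' hf' => ?_⟩
        have h2 : sInf S ≤ R f' L := csInf_le hbdd ⟨f', hf', rfl⟩
        linarith
      have hpick : ∀ v : Fin (K-1) → Fin (m+1), ∃ g : F,
          (∃ f, φ f = v) → (φ g = v ∧ ∀ f', φ f' = v → R g L ≤ R f' L + t) := by
        intro v
        by_cases hv : ∃ f, φ f = v
        · obtain ⟨f, hf⟩ := hv
          obtain ⟨g, hg1, hg2⟩ := key f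
          subst hf
          exact ⟨g, fun _ => ⟨hg1, hg2⟩⟩
        · exact ⟨hF.some, fun h => absurd h hv⟩
      choose pick hpickspec using hpick
      refine ⟨Finset.image pick Finset.univ, ?_, ?_⟩
      · have h1 : (Finset.image pick Finset.univ).card ≤ (m+1)^(K-1) := by
          calc (Finset.image pick Finset.univ).card
              ≤ (Finset.univ : Finset (Fin (K-1) → Fin (m+1))).card :=
                Finset.card_image_le
            _ = (m+1)^(K-1) := by simp [Finset.card_univ]
        have h2 : ((m:ℝ)+1) ≤ 1 + 1/t := by
          have := Nat.floor_le (le_of_lt (by positivity : (0:ℝ) < 1/t))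
          rw [← hm] at this
          linarith
        calc ((Finset.image pick Finset.univ).card : ℝ)
            ≤ ((m+1)^(K-1) : ℕ) := by exact_mod_cast h1
          _ = ((m:ℝ)+1)^(K-1) := by push_cast; ring
          _ ≤ (1 + 1/t)^(K-1) := by
              apply pow_le_pow_left₀ (by positivity) h2
      · intro f
        have hv : ∃ f', φ f' = φ f := ⟨f, rfl⟩
        obtain ⟨hg1, hg2⟩ := hpickspec (φ f) hv
        refine ⟨pick (φ f), Finset.mem_image.mpr ⟨φ f, Finset.mem_univ _, rfl⟩, ?_⟩
        intro k
        by_cases hk : (k : ℕ) = K - 1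
        · have : k = L := Fin.ext hk
          rw [this]
          exact hg2 f rfl
        · have hk' : (k : ℕ) < K - 1 := by omega
          set k' : Fin (K-1) := ⟨k, hk'⟩ with hk'def
          have hkk : k'.castLE hle = k := Fin.ext rfl
          have hfloor : ⌊R (pick (φ f)) (k'.castLE hle) / t⌋₊ = ⌊R f (k'.castLE hle) / t⌋₊ := by
            have := congrFun hg1 k'
            simpa [hφ] using congrArg Fin.val this
          rw [hkk] at hfloor
          have hd1 : R (pick (φ f)) k / t < ⌊R (pick (φ f)) k / t⌋₊ + 1 :=
            Nat.lt_floor_add_one _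
          have hd2 : (⌊R f k / t⌋₊ : ℝ) ≤ R f k / t :=
            Nat.floor_le (div_nonneg (hbound f k).1 ht0.le)
          rw [hfloor] at hd1
          have hdiv : R (pick (φ f)) k / t < R f k / t + 1 := by linarith
          have h4 : R f k / t + 1 = (R f k + t)/t := by field_simp
          rw [h4] at hdiv
          have h5 := mul_lt_mul_of_pos_right hdiv ht0
          rw [div_mul_cancel₀ _ ht0.ne', div_mul_cancel₀ _ ht0.ne'] at h5
          exact h5.le
end

section
/- Let n be a unit vector in ℝ^K with all components n_k > η > 0, and let V = {v ∈ ℝ^K : v·n = 0} be the hyperplane through the origin with normal n. Then for all r, r' ∈ V, the Pareto distance satisfies d(r,r') = max_k (r_k − r'_k) ≥ (η/(K(1+η))) ||r − r'||_2. -/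
/-!
Put `v = r - r'`, so `∑ₖ vₖ nₖ = 0`. Splitting `v = v⁺ - v⁻`, the orthogonality gives
`∑ v⁻ₖ nₖ = ∑ v⁺ₖ nₖ`, and since `η < nₖ ≤ ‖n‖ = 1` this yields `η ∑ v⁻ₖ ≤ ∑ v⁺ₖ`; hence
`η ‖v‖₁ ≤ (1 + η) ∑ v⁺ₖ`. Orthogonality to a positive vector also forces `max v ≥ 0`, so
`∑ v⁺ₖ ≤ K max v`, and `‖v‖₂ ≤ ‖v‖₁` finishes the bound.
-/

open Finset

theorem EuclideanSpace.norm_le_sum_norm {𝕜 ι : Type*} [RCLike 𝕜] [Fintype ι]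
    (x : EuclideanSpace 𝕜 ι) : ‖x‖ ≤ ∑ i, ‖x i‖ := by
  rw [EuclideanSpace.norm_eq, Real.sqrt_le_iff]
  exact ⟨by positivity, sum_sq_le_sq_sum_of_nonneg fun i _ => norm_nonneg (x i)⟩

theorem EuclideanSpace.apply_le_one_of_norm_eq_one {ι : Type*} [Fintype ι]
    {x : EuclideanSpace ℝ ι} (hx : ‖x‖ = 1) (i : ι) : x i ≤ 1 :=
  (le_abs_self _).trans (hx ▸ PiLp.norm_apply_le x i)

section Orthogonal

variable {ι : Type*} [Fintype ι] {v w : ι → ℝ}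

theorem sum_negPart_mul_eq_sum_posPart_mul (h : ∑ i, v i * w i = 0) :
    ∑ i, (v i)⁻ * w i = ∑ i, (v i)⁺ * w i := by
  have : ∑ i, ((v i)⁺ * w i - (v i)⁻ * w i) = 0 := by
    simpa only [← sub_mul, posPart_sub_negPart] using h
  rw [sum_sub_distrib] at this
  linarith

theorem mul_sum_abs_le_of_sum_mul_eq_zero {η : ℝ} (hηw : ∀ i, η ≤ w i) (hw1 : ∀ i, w i ≤ 1)
    (h : ∑ i, v i * w i = 0) : η * ∑ i, |v i| ≤ (1 + η) * ∑ i, (v i)⁺ := by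
  have hneg : η * ∑ i, (v i)⁻ ≤ ∑ i, (v i)⁻ * w i := by
    rw [mul_sum]
    exact sum_le_sum fun i _ =>
      (mul_comm _ _).trans_le (mul_le_mul_of_nonneg_left (hηw i) (negPart_nonneg _))
  have hpos : ∑ i, (v i)⁺ * w i ≤ ∑ i, (v i)⁺ :=
    sum_le_sum fun i _ => mul_le_of_le_one_right (posPart_nonneg _) (hw1 i)
  simp only [← posPart_add_negPart, sum_add_distrib]
  linarith [sum_negPart_mul_eq_sum_posPart_mul h]

theorem zero_le_sup'_of_sum_mul_eq_zero (hw : ∀ i, 0 < w i) (h : ∑ i, v i * w i = 0)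
    (hne : (univ : Finset ι).Nonempty) : 0 ≤ univ.sup' hne v := by
  by_contra! hneg
  have : ∑ i, v i * w i < 0 := sum_neg
    (fun i _ => mul_neg_of_neg_of_pos ((le_sup' v (mem_univ i)).trans_lt hneg) (hw i)) hne
  exact this.ne h

theorem sum_posPart_le_card_mul_sup' (hne : (univ : Finset ι).Nonempty)
    (h0 : 0 ≤ univ.sup' hne v) : ∑ i, (v i)⁺ ≤ Fintype.card ι * univ.sup' hne v := by
  calc ∑ i, (v i)⁺ ≤ ∑ _i : ι, univ.sup' hne v :=
        sum_le_sum fun i _ => max_le (le_sup' v (mem_univ i)) h0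
    _ = _ := by simp

theorem mul_sum_abs_le_card_mul_sup' {η : ℝ} (hη : 0 < η) (hηw : ∀ i, η ≤ w i)
    (hw1 : ∀ i, w i ≤ 1) (h : ∑ i, v i * w i = 0) (hne : (univ : Finset ι).Nonempty) :
    η * ∑ i, |v i| ≤ Fintype.card ι * (1 + η) * univ.sup' hne v := by
  have h0 := zero_le_sup'_of_sum_mul_eq_zero (fun i => hη.trans_le (hηw i)) h hne
  calc η * ∑ i, |v i| ≤ (1 + η) * ∑ i, (v i)⁺ := mul_sum_abs_le_of_sum_mul_eq_zero hηw hw1 h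
    _ ≤ (1 + η) * (Fintype.card ι * univ.sup' hne v) := by
        gcongr; exact sum_posPart_le_card_mul_sup' hne h0
    _ = _ := by ring

end Orthogonal

/-- On a linear Pareto front `V = {v : v ⬝ n = 0}` with unit normal `n`
whose coordinates all exceed `η > 0`, the Pareto distance dominates a multiple of the
Euclidean distance: `max_k (r_k - r'_k) ≥ (η/(K(1+η))) ‖r - r'‖₂`. -/
theorem pareto_distance_lower_bound_linear_front {K : ℕ} (hK : 0 < K)
    (η : ℝ) (hη : 0 < η)
    (n : EuclideanSpace ℝ (Fin K)) (hn : ‖n‖ = 1) (hnk : ∀ k, η < n k)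
    (r r' : EuclideanSpace ℝ (Fin K))
    (hr : inner ℝ r n = (0:ℝ)) (hr' : inner ℝ r' n = (0:ℝ)) :
    (η / (K * (1 + η))) * ‖r - r'‖ ≤
      Finset.univ.sup' (Finset.univ_nonempty_iff.mpr ⟨⟨0, hK⟩⟩)
        (fun k => r k - r' k) := by
  have horth : ∑ k, (r k - r' k) * n k = 0 := by
    have h : inner ℝ (r - r') n = (0 : ℝ) := by rw [inner_sub_left, hr, hr', sub_zero]
    simpa [PiLp.inner_apply, mul_comm] using h
  have hsum := mul_sum_abs_le_card_mul_sup' hη (fun k => (hnk k).le)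
      (EuclideanSpace.apply_le_one_of_norm_eq_one hn) horth (univ_nonempty_iff.mpr ⟨⟨0, hK⟩⟩)
  have hnorm : ‖r - r'‖ ≤ ∑ k, |r k - r' k| := by
    simpa using EuclideanSpace.norm_le_sum_norm (r - r')
  rw [Fintype.card_fin] at hsum
  rw [div_mul_eq_mul_div, div_le_iff₀ (by positivity)]
  calc η * ‖r - r'‖ ≤ η * ∑ k, |r k - r' k| := by gcongr
    _ ≤ _ := by linarith
end

section
/- Let f_1,…,f_N be a t-Pareto set for (F,R), and let f̂ be the empirical risk minimizer over {f_1,…,f_N} using n i.i.d. samples from Q with loss bounded in [0,1]. Then with probability at least 1−δ, R_Q(f̂) − inf_{f∈F} R_Q(f) ≤ ω̄(t) + sqrt(2 log(2N/δ)/n). -/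
/-!
On the event that each of the `N` empirical sums deviates from `n` times its mean by less than
`n ε / 2`, the empirical risk minimizer `f̂ = f_j` satisfies `R_Q(f_j) < R_Q(f_{j*}) + ε`, where
`f_{j*}` is the member of the Pareto set covering `f*`; and `R_Q(f_{j*}) - R_Q(f*) ≤ ω̄(t)`
because `f_{j*}` lies in the `t`-Pareto ball of `f*`. By Hoeffding's inequality and a union bound
the event has probability at least `1 - 2 N exp(-n ε² / 2)`, which is `1 - δ` for the chosen `ε`.
-/

open MeasureTheory Set ProbabilityTheory Real
open scoped NNReal

namespace ProbabilityTheory.HasSubgaussianMGF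

variable {Ω : Type*} [MeasurableSpace Ω] {μ : Measure Ω} {X : Ω → ℝ} {c : ℝ≥0}

lemma measureReal_le_abs_le (h : HasSubgaussianMGF X c μ) {ε : ℝ} (hε : 0 ≤ ε) :
    μ.real {ω | ε ≤ |X ω|} ≤ 2 * exp (-ε ^ 2 / (2 * c)) := by
  have hsplit : {ω | ε ≤ |X ω|} = {ω | ε ≤ X ω} ∪ {ω | ε ≤ (-X) ω} := by
    ext ω; simp [le_abs]
  calc μ.real {ω | ε ≤ |X ω|} ≤ μ.real {ω | ε ≤ X ω} + μ.real {ω | ε ≤ (-X) ω} :=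
        hsplit ▸ measureReal_union_le _ _
    _ ≤ exp (-ε ^ 2 / (2 * c)) + exp (-ε ^ 2 / (2 * c)) :=
        add_le_add (h.measure_ge_le hε) (h.neg.measure_ge_le hε)
    _ = 2 * exp (-ε ^ 2 / (2 * c)) := by ring

end ProbabilityTheory.HasSubgaussianMGF

section Hoeffding

variable {Z : Type*} [MeasurableSpace Z] {Q : Measure Z} [IsProbabilityMeasure Q]
  {ι : Type*} [Fintype ι]

lemma hasSubgaussianMGF_sum_sub_integral_pi {g : Z → ℝ} (hg : Measurable g) {a b : ℝ}
    (hb : ∀ z, g z ∈ Icc a b) :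
    HasSubgaussianMGF (fun ω : ι → Z ↦ ∑ i, (g (ω i) - ∫ z, g z ∂Q))
      (Fintype.card ι * (‖b - a‖₊ / 2) ^ 2) (Measure.pi fun _ ↦ Q) := by
  have hindep : iIndepFun (fun i (ω : ι → Z) ↦ g (ω i) - ∫ z, g z ∂Q) (Measure.pi fun _ ↦ Q) :=
    iIndepFun_pi (X := fun _ z ↦ g z - ∫ z, g z ∂Q) fun _ ↦ (hg.sub_const _).aemeasurable
  have hsubG (i : ι) : HasSubgaussianMGF (fun ω : ι → Z ↦ g (ω i) - ∫ z, g z ∂Q)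
      ((‖b - a‖₊ / 2) ^ 2) (Measure.pi fun _ ↦ Q) := by
    have h := hasSubgaussianMGF_of_mem_Icc (μ := Measure.pi fun _ ↦ Q)
      (X := fun ω ↦ g (ω i)) (hg.comp (measurable_pi_apply i)).aemeasurable
      (ae_of_all _ fun ω ↦ hb (ω i))
    rwa [integral_comp_eval hg.aestronglyMeasurable] at h
  simpa using HasSubgaussianMGF.sum_of_iIndepFun hindep (s := Finset.univ) fun i _ ↦ hsubG i

lemma one_sub_le_measureReal_forall_abs_sum_sub_lt {κ : Type*} [Fintype κ] {g : κ → Z → ℝ}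
    (hg : ∀ j, Measurable (g j)) (hb : ∀ j z, g j z ∈ Icc 0 1) {ε : ℝ} (hε : 0 ≤ ε) :
    1 - Fintype.card κ * (2 * exp (-2 * ε ^ 2 / Fintype.card ι)) ≤
      (Measure.pi fun _ : ι ↦ Q).real
        {ω | ∀ j, |∑ i, g j (ω i) - Fintype.card ι * ∫ z, g j z ∂Q| < ε} := by
  set μ := Measure.pi fun _ : ι ↦ Q
  set dev : κ → (ι → Z) → ℝ := fun j ω ↦ ∑ i, (g j (ω i) - ∫ z, g j z ∂Q)
  have hdev (j : κ) (ω : ι → Z) :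
      ∑ i, g j (ω i) - Fintype.card ι * ∫ z, g j z ∂Q = dev j ω := by
    simp [dev, Finset.sum_sub_distrib]
  have htail (j : κ) : μ.real {ω | ε ≤ |dev j ω|} ≤ 2 * exp (-2 * ε ^ 2 / Fintype.card ι) := by
    refine ((hasSubgaussianMGF_sum_sub_integral_pi (hg j) (hb j)).measureReal_le_abs_le
      hε).trans_eq ?_
    congr 2
    push_cast
    norm_num
    ring
  have hbad : MeasurableSet (⋃ j, {ω | ε ≤ |dev j ω|}) := by
    refine MeasurableSet.iUnion fun j ↦ measurableSet_le measurable_const ?_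
    fun_prop
  have hgood : {ω | ∀ j, |∑ i, g j (ω i) - Fintype.card ι * ∫ z, g j z ∂Q| < ε}
      = (⋃ j, {ω | ε ≤ |dev j ω|})ᶜ := by
    ext ω; simp [hdev]
  rw [hgood, probReal_compl_eq_one_sub hbad]
  gcongr
  calc μ.real (⋃ j, {ω | ε ≤ |dev j ω|}) ≤ ∑ j, μ.real {ω | ε ≤ |dev j ω|} :=
        measureReal_iUnion_fintype_le _
    _ ≤ ∑ _j : κ, 2 * exp (-2 * ε ^ 2 / Fintype.card ι) := Finset.sum_le_sum fun j _ ↦ htail j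
    _ = _ := by simp

end Hoeffding

lemma integral_mem_Icc_zero_one {Z : Type*} [MeasurableSpace Z] {Q : Measure Z}
    [IsProbabilityMeasure Q] {g : Z → ℝ} (hg : ∀ z, g z ∈ Icc 0 1) : ∫ z, g z ∂Q ∈ Icc 0 1 := by
  refine ⟨integral_nonneg fun z ↦ (hg z).1, ?_⟩
  simpa using integral_mono_of_nonneg (ae_of_all _ fun z ↦ (hg z).1)
    (integrable_const (μ := Q) (1 : ℝ)) (ae_of_all _ fun z ↦ (hg z).2)

lemma lt_add_of_abs_sub_mul_lt_of_le {n S T x y ε : ℝ} (hn : 0 < n)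
    (hS : |S - n * x| < n * ε / 2) (hT : |T - n * y| < n * ε / 2) (hST : S ≤ T) :
    x < y + ε := by
  rw [abs_lt] at hS hT
  have : n * x < n * (y + ε) := by linarith
  exact lt_of_mul_lt_mul_left this hn.le

lemma natCast_mul_two_mul_exp_neg_eq {N n : ℕ} {δ : ℝ} (hN : 0 < N) (hn : 0 < n) (hδ : 0 < δ)
    (hδN : δ ≤ 2 * N) :
    N * (2 * exp (-2 * (n * √(2 * log (2 * N / δ) / n) / 2) ^ 2 / n)) = δ := by
  have hlog : 0 ≤ log (2 * N / δ) := log_nonneg ((one_le_div hδ).2 hδN)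
  have hexp : -2 * (n * √(2 * log (2 * N / δ) / n) / 2) ^ 2 / n = -log (2 * N / δ) := by
    rw [div_pow, mul_pow, sq_sqrt (by positivity)]
    field_simp
  rw [hexp, exp_neg, exp_log (by positivity), inv_div]
  field_simp

theorem pareto_erm_excess_risk_bound_general {F Z : Type*} [MeasurableSpace Z]
    {K N n : ℕ} (Q : Measure Z) [IsProbabilityMeasure Q]
    (ℓ : F → Z → ℝ) (hmeas : ∀ f, Measurable (ℓ f))
    (hb : ∀ f z, ℓ f z ∈ Icc (0:ℝ) 1)
    (R : F → Fin K → ℝ) (RQ : F → ℝ) (hRQ : ∀ f, RQ f = ∫ z, ℓ f z ∂Q)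
    (t : ℝ)
    (fs : Fin N → F) (hcover : ∀ f : F, ∃ j, ∀ k, R (fs j) k ≤ R f k + t)
    (fstar : F)
    (hn : 0 < n)
    (δ : ℝ) (hδ : δ ∈ Ioo (0:ℝ) 1)
    (fhat : (Fin n → Z) → F)
    (herm : ∀ ω : Fin n → Z, ∃ j, fhat ω = fs j ∧
      ∀ i, ∑ l, ℓ (fhat ω) (ω l) ≤ ∑ l, ℓ (fs i) (ω l)) :
    ENNReal.ofReal (1 - δ) ≤
      (Measure.pi fun _ : Fin n => Q)
        {ω | RQ (fhat ω) - RQ fstar ≤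
          sSup {x : ℝ | ∃ f f' : F, (∀ k, R f k ≤ R f' k + t) ∧ x = RQ f - RQ f'} +
          Real.sqrt (2 * Real.log (2 * N / δ) / n)} := by
  obtain ⟨jstar, hjstar⟩ := hcover fstar
  have hN : 0 < N := Fin.pos jstar
  set ε := √(2 * log (2 * N / δ) / n)
  have hRQ_mem (f : F) : RQ f ∈ Icc 0 1 := hRQ f ▸ integral_mem_Icc_zero_one (hb f)
  have hW : RQ (fs jstar) - RQ fstar ≤
      sSup {x : ℝ | ∃ f f' : F, (∀ k, R f k ≤ R f' k + t) ∧ x = RQ f - RQ f'} := by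
    refine le_csSup ⟨1, ?_⟩ ⟨_, _, hjstar, rfl⟩
    rintro _ ⟨f, f', -, rfl⟩
    linarith [(hRQ_mem f).2, (hRQ_mem f').1]
  have hconc := one_sub_le_measureReal_forall_abs_sum_sub_lt (Q := Q) (ι := Fin n)
    (fun j ↦ hmeas (fs j)) (fun j ↦ hb (fs j)) (ε := n * ε / 2) (by positivity)
  have hδN : δ ≤ 2 * N := by linarith [hδ.2, (Nat.one_le_cast.2 hN : (1 : ℝ) ≤ N)]
  rw [Fintype.card_fin, Fintype.card_fin, natCast_mul_two_mul_exp_neg_eq hN hn hδ.1 hδN] at hconc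
  refine (ENNReal.ofReal_le_ofReal hconc).trans ?_
  rw [ofReal_measureReal]
  refine measure_mono fun ω hω ↦ ?_
  obtain ⟨j, hj, hmin⟩ := herm ω
  simp only [mem_ofPred_eq, ← hRQ, hj] at hω hmin ⊢
  linarith [lt_add_of_abs_sub_mul_lt_of_le (Nat.cast_pos.2 hn) (hω j) (hω jstar) (hmin jstar)]

/-- Excess-risk bound for the Pareto ERM. If `f_1, …, f_N` is a
`t`-Pareto set and `f̂` is the empirical risk minimizer over it based on `n` i.i.d.
samples from `Q`, then with probability at least `1 − δ`,
`R_Q(f̂) − inf_F R_Q ≤ ω̄(t) + √(2 log(2N/δ)/n)`. -/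
theorem pareto_erm_excess_risk_bound {F Z : Type*} [MeasurableSpace Z]
    {K N n : ℕ} (Q : Measure Z) [IsProbabilityMeasure Q]
    (ℓ : F → Z → ℝ) (hmeas : ∀ f, Measurable (ℓ f))
    (hb : ∀ f z, ℓ f z ∈ Icc (0:ℝ) 1)
    (R : F → Fin K → ℝ) (RQ : F → ℝ) (hRQ : ∀ f, RQ f = ∫ z, ℓ f z ∂Q)
    (t : ℝ) (ht : 0 ≤ t)
    (fs : Fin N → F) (hcover : ∀ f : F, ∃ j, ∀ k, R (fs j) k ≤ R f k + t)
    (fstar : F) (hstar : ∀ f, RQ fstar ≤ RQ f)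
    (hn : 0 < n) (hN : 0 < N)
    (δ : ℝ) (hδ : δ ∈ Ioo (0:ℝ) 1)
    (fhat : (Fin n → Z) → F)
    (herm : ∀ ω : Fin n → Z, ∃ j, fhat ω = fs j ∧
      ∀ i, ∑ l, ℓ (fhat ω) (ω l) ≤ ∑ l, ℓ (fs i) (ω l)) :
    ENNReal.ofReal (1 - δ) ≤
      (Measure.pi fun _ : Fin n => Q)
        {ω | RQ (fhat ω) - RQ fstar ≤
          sSup {x : ℝ | ∃ f f' : F, (∀ k, R f k ≤ R f' k + t) ∧ x = RQ f - RQ f'} +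
          Real.sqrt (2 * Real.log (2 * N / δ) / n)} :=
  pareto_erm_excess_risk_bound_general Q ℓ hmeas hb R RQ hRQ t fs hcover fstar hn δ hδ fhat herm
end

section
/- If the lower modulus satisfies ω̲(t) ≥ t and the upper modulus satisfies ω̄(t) ≤ t for all t ∈ [0,1], and φ_ρ ∈ F satisfies R(φ_ρ) = R(f_ρ) − Φ(ρ)·1 coordinatewise with Φ(ρ) ∈ [0,1], then R_Q(f_ρ) − R_Q(φ_ρ) = Φ(ρ). -/
/-- If the lower modulus satisfies `ω̲(t) ≥ t` and the upper modulus
satisfies `ω̄(t) ≤ t` for all `t ∈ [0,1]`, and `φ_ρ` satisfies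
`R(φ_ρ) = R(f_ρ) − Φ(ρ)·1` with `Φ(ρ) ∈ [0,1]`, then `R_Q(f_ρ) − R_Q(φ_ρ) = Φ(ρ)`. -/
theorem risk_gap_equals_pareto_gap {F : Type*} {K : ℕ}
    (R : F → Fin K → ℝ) (RQ : F → ℝ)
    (hRQb : ∀ f, RQ f ∈ Set.Icc (0:ℝ) 1)
    (hupper : ∀ t ∈ Set.Icc (0:ℝ) 1,
      sSup {x : ℝ | ∃ f f' : F, (∀ k, R f k ≤ R f' k + t) ∧ x = RQ f - RQ f'} ≤ t)
    (hlower : ∀ t ∈ Set.Icc (0:ℝ) 1,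
      t ≤ sInf {x : ℝ | ∃ f f' : F, (∀ k, R f k ≤ R f' k - t) ∧ x = RQ f' - RQ f})
    (fρ φρ : F) (Φ : ℝ) (hΦ : Φ ∈ Set.Icc (0:ℝ) 1)
    (hφ : ∀ k, R φρ k = R fρ k - Φ) :
    RQ fρ - RQ φρ = Φ := by
  have hub : BddAbove {x : ℝ | ∃ f f' : F, (∀ k, R f k ≤ R f' k + Φ) ∧ x = RQ f - RQ f'} := by
    refine ⟨1, ?_⟩
    rintro x ⟨f, f', -, rfl⟩
    have h1 := (hRQb f).2
    have h2 := (hRQb f').1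
    linarith
  have hlb : BddBelow {x : ℝ | ∃ f f' : F, (∀ k, R f k ≤ R f' k - Φ) ∧ x = RQ f' - RQ f} := by
    refine ⟨-1, ?_⟩
    rintro x ⟨f, f', -, rfl⟩
    have h1 := (hRQb f').1
    have h2 := (hRQb f).2
    linarith
  have hmem1 : (RQ fρ - RQ φρ) ∈
      {x : ℝ | ∃ f f' : F, (∀ k, R f k ≤ R f' k + Φ) ∧ x = RQ f - RQ f'} :=
    ⟨fρ, φρ, fun k => by have := hφ k; linarith, rfl⟩
  have hmem2 : (RQ fρ - RQ φρ) ∈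
      {x : ℝ | ∃ f f' : F, (∀ k, R f k ≤ R f' k - Φ) ∧ x = RQ f' - RQ f} :=
    ⟨φρ, fρ, fun k => by have := hφ k; linarith, rfl⟩
  have h1 : RQ fρ - RQ φρ ≤ Φ :=
    le_trans (le_csSup hub hmem1) (hupper Φ hΦ)
  have h2 : Φ ≤ RQ fρ - RQ φρ :=
    le_trans (hlower Φ hΦ) (csInf_le hlb hmem2)
  linarith
end

section
/- Consider F = {f_θ : θ ∈ [0,1]², θ_1 + θ_2 ≥ 1} with R_1(f_θ) = θ_1, R_2(f_θ) = θ_2, and target risk R_Q(f_θ) = |θ_1 + θ_2 − (1+γ_0)| for a fixed γ_0 ∈ (0, 1/2). Then the lower modulus of monotonicity equals ω̲(t) = −γ_0 for t ≤ γ_0/2, ω̲(t) = 2(t − γ_0) for γ_0/2 < t ≤ 1/2, and ω̲(t) = 1 for t > 1/2; consequently the monotonicity threshold t̲ := inf{t : ω̲(t) ≥ 0} equals γ_0. -/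
open Classical in
/-- The lower modulus of monotonicity for the example
`F = {θ ∈ [0,1]² : θ₁ + θ₂ ≥ 1}`, `R₁(θ) = θ₁`, `R₂(θ) = θ₂`,
`R_Q(θ) = |θ₁ + θ₂ − (1 + γ₀)|` (with convention `1` if the defining set is empty). -/
noncomputable def exampleLowerModulus (γ₀ : ℝ) (t : ℝ) : ℝ :=
  let Fset : Set (ℝ × ℝ) :=
    {θ | θ.1 ∈ Set.Icc (0:ℝ) 1 ∧ θ.2 ∈ Set.Icc (0:ℝ) 1 ∧ 1 ≤ θ.1 + θ.2}
  let RQ : ℝ × ℝ → ℝ := fun θ => |θ.1 + θ.2 - (1 + γ₀)|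
  let S : Set ℝ :=
    {x | ∃ θ ∈ Fset, ∃ θ' ∈ Fset,
      θ.1 ≤ θ'.1 - t ∧ θ.2 ≤ θ'.2 - t ∧ x = RQ θ' - RQ θ}
  if S.Nonempty then sInf S else 1

/-- The defining set of the lower modulus, unfolded. -/
def exS (γ₀ t : ℝ) : Set ℝ :=
  {x | ∃ θ ∈ {θ : ℝ × ℝ | θ.1 ∈ Set.Icc (0:ℝ) 1 ∧ θ.2 ∈ Set.Icc (0:ℝ) 1 ∧ 1 ≤ θ.1 + θ.2},
    ∃ θ' ∈ {θ : ℝ × ℝ | θ.1 ∈ Set.Icc (0:ℝ) 1 ∧ θ.2 ∈ Set.Icc (0:ℝ) 1 ∧ 1 ≤ θ.1 + θ.2},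
    θ.1 ≤ θ'.1 - t ∧ θ.2 ≤ θ'.2 - t ∧
      x = |θ'.1 + θ'.2 - (1 + γ₀)| - |θ.1 + θ.2 - (1 + γ₀)|}

open Classical in
lemma exLM_eq (γ₀ t : ℝ) :
    exampleLowerModulus γ₀ t = if (exS γ₀ t).Nonempty then sInf (exS γ₀ t) else 1 := rfl

lemma exS_lb {γ₀ t : ℝ} (hγ0 : 0 < γ₀) (ht0 : 0 ≤ t) :
    ∀ x ∈ exS γ₀ t, max (-γ₀) (2 * (t - γ₀)) ≤ x := by
  rintro x ⟨θ, ⟨⟨hθ10, hθ11⟩, ⟨hθ20, hθ21⟩, hθs⟩, θ', ⟨⟨h10, h11⟩, ⟨h20, h21⟩, hθ's⟩,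
    hd1, hd2, rfl⟩
  rcases abs_cases (θ'.1 + θ'.2 - (1 + γ₀)) with ⟨hA, _⟩ | ⟨hA, _⟩ <;>
    rcases abs_cases (θ.1 + θ.2 - (1 + γ₀)) with ⟨hB, _⟩ | ⟨hB, _⟩ <;>
      refine max_le (by linarith) (by linarith)

lemma exS_mem {γ₀ t : ℝ} {a b a' b' : ℝ}
    (h1 : 0 ≤ a) (h2 : a ≤ 1) (h3 : 0 ≤ b) (h4 : b ≤ 1) (h5 : 1 ≤ a + b)
    (h1' : 0 ≤ a') (h2' : a' ≤ 1) (h3' : 0 ≤ b') (h4' : b' ≤ 1) (h5' : 1 ≤ a' + b')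
    (hd1 : a ≤ a' - t) (hd2 : b ≤ b' - t) :
    |a' + b' - (1 + γ₀)| - |a + b - (1 + γ₀)| ∈ exS γ₀ t := by
  exact ⟨(a, b), ⟨⟨h1, h2⟩, ⟨h3, h4⟩, h5⟩, (a', b'), ⟨⟨h1', h2'⟩, ⟨h3', h4'⟩, h5'⟩,
    hd1, hd2, rfl⟩

lemma exLM_eq_max {γ₀ t : ℝ} (hγ0 : 0 < γ₀) (hγ1 : γ₀ < 1/2) (ht0 : 0 ≤ t) (ht1 : t ≤ 1/2) :
    exampleLowerModulus γ₀ t = max (-γ₀) (2 * (t - γ₀)) := by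
  rcases le_or_gt t (γ₀ / 2) with hc | hc
  · -- witness giving -γ₀
    have hmem : (-γ₀ : ℝ) ∈ exS γ₀ t := by
      have h := exS_mem (γ₀ := γ₀) (t := t) (a := 1/2) (b := 1/2)
        (a' := (1 + γ₀)/2) (b' := (1 + γ₀)/2)
        (by norm_num) (by norm_num) (by norm_num) (by norm_num) (by norm_num)
        (by linarith) (by linarith) (by linarith) (by linarith) (by linarith)
        (by linarith) (by linarith)
      have e1 : ((1 + γ₀)/2 + (1 + γ₀)/2 - (1 + γ₀)) = 0 := by ring
      have e2 : |(1:ℝ)/2 + 1/2 - (1 + γ₀)| = γ₀ := by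
        rw [abs_of_nonpos (by linarith)]; ring
      rwa [e1, abs_zero, e2, zero_sub] at h
    have hmax : max (-γ₀) (2 * (t - γ₀)) = -γ₀ := max_eq_left (by linarith)
    rw [exLM_eq, if_pos ⟨_, hmem⟩, hmax]
    exact le_antisymm (csInf_le ⟨_, fun x hx => (hmax ▸ exS_lb hγ0 ht0 x hx)⟩ hmem)
      (le_csInf ⟨_, hmem⟩ (fun x hx => hmax ▸ exS_lb hγ0 ht0 x hx))
  · -- witness giving 2(t-γ₀)
    have hmem : (2 * (t - γ₀) : ℝ) ∈ exS γ₀ t := by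
      have h := exS_mem (γ₀ := γ₀) (t := t) (a := 1/2) (b := 1/2)
        (a' := 1/2 + t) (b' := 1/2 + t)
        (by norm_num) (by norm_num) (by norm_num) (by norm_num) (by norm_num)
        (by linarith) (by linarith) (by linarith) (by linarith) (by linarith)
        (by linarith) (by linarith)
      have e1 : |(1/2 + t) + (1/2 + t) - (1 + γ₀)| = 2*t - γ₀ := by
        rw [abs_of_nonneg (by linarith)]; ring
      have e2 : |(1:ℝ)/2 + 1/2 - (1 + γ₀)| = γ₀ := by
        rw [abs_of_nonpos (by linarith)]; ring
      have e3 : 2*t - γ₀ - γ₀ = 2 * (t - γ₀) := by ring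
      rwa [e1, e2, e3] at h
    have hmax : max (-γ₀) (2 * (t - γ₀)) = 2 * (t - γ₀) := max_eq_right (by linarith)
    rw [exLM_eq, if_pos ⟨_, hmem⟩, hmax]
    exact le_antisymm (csInf_le ⟨_, fun x hx => (hmax ▸ exS_lb hγ0 ht0 x hx)⟩ hmem)
      (le_csInf ⟨_, hmem⟩ (fun x hx => hmax ▸ exS_lb hγ0 ht0 x hx))

lemma exLM_eq_one {γ₀ t : ℝ} (ht : 1/2 < t) : exampleLowerModulus γ₀ t = 1 := by
  rw [exLM_eq, if_neg]
  rintro ⟨x, θ, ⟨⟨hθ10, hθ11⟩, ⟨hθ20, hθ21⟩, hθs⟩, θ', ⟨⟨h10, h11⟩, ⟨h20, h21⟩, hθ's⟩,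
    hd1, hd2, rfl⟩
  linarith

/-- In the above example, for `γ₀ ∈ (0, 1/2)`, the lower modulus equals
`−γ₀` for `t ≤ γ₀/2`, equals `2(t − γ₀)` for `γ₀/2 < t ≤ 1/2`, equals `1` for
`t > 1/2`; consequently the threshold `t̲ = inf{t ∈ [0,1] : ω̲(t) ≥ 0}` equals `γ₀`. -/
theorem example_lower_modulus_formula (γ₀ : ℝ) (hγ : γ₀ ∈ Set.Ioo (0:ℝ) (1/2)) :
    (∀ t : ℝ, 0 ≤ t → t ≤ γ₀ / 2 → exampleLowerModulus γ₀ t = -γ₀) ∧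
    (∀ t : ℝ, γ₀ / 2 < t → t ≤ 1/2 → exampleLowerModulus γ₀ t = 2 * (t - γ₀)) ∧
    (∀ t : ℝ, 1/2 < t → exampleLowerModulus γ₀ t = 1) ∧
    sInf {t : ℝ | t ∈ Set.Icc (0:ℝ) 1 ∧ 0 ≤ exampleLowerModulus γ₀ t} = γ₀ := by
  obtain ⟨hγ0, hγ1⟩ := hγ
  have h1 : ∀ t : ℝ, 0 ≤ t → t ≤ γ₀ / 2 → exampleLowerModulus γ₀ t = -γ₀ := by
    intro t ht0 ht
    rw [exLM_eq_max hγ0 hγ1 ht0 (by linarith)]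
    exact max_eq_left (by linarith)
  have h2 : ∀ t : ℝ, γ₀ / 2 < t → t ≤ 1/2 → exampleLowerModulus γ₀ t = 2 * (t - γ₀) := by
    intro t ht ht1
    rw [exLM_eq_max hγ0 hγ1 (by linarith) ht1]
    exact max_eq_right (by linarith)
  have h3 : ∀ t : ℝ, 1/2 < t → exampleLowerModulus γ₀ t = 1 :=
    fun t ht => exLM_eq_one ht
  refine ⟨h1, h2, h3, ?_⟩
  apply le_antisymm
  · refine csInf_le ⟨0, ?_⟩ ⟨⟨by linarith, by linarith⟩, ?_⟩
    · rintro x ⟨⟨hx0, _⟩, _⟩; exact hx0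
    · rw [h2 γ₀ (by linarith) (by linarith)]; simp
  · refine le_csInf ⟨γ₀, ⟨by constructor <;> linarith, by
      rw [h2 γ₀ (by linarith) (by linarith)]; simp⟩⟩ ?_
    rintro t ⟨⟨ht0, ht1⟩, hω⟩
    by_contra hlt
    push_neg at hlt
    have htle : t ≤ γ₀ / 2 ∨ (γ₀ / 2 < t ∧ t ≤ 1/2) := by
      rcases le_or_gt t (γ₀/2) with h | h
      · exact Or.inl h
      · exact Or.inr ⟨h, by linarith⟩
    rcases htle with h | ⟨ha, hb⟩
    · rw [h1 t ht0 h] at hω; linarith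
    · rw [h2 t ha hb] at hω; linarith
end
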